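/- Let Λ be a subring of ℝ, let U be a free Λ-module of finite rank g ≥ 1 with dual basis of linear forms y₁, …, y_g ∈ U* := Hom_Λ(U, Λ), and let x₁, …, x_m ∈ U* be linear forms such that d · y₁(u)·y₁(v) = Σ_{j=1}^{m} x_j(u)·x_j(v) for all u, v ∈ U, for some d ∈ Λ. Then each x_j is a scalar multiple of y₁, i.e., there exist a_j ∈ Λ with x_j = a_j · y₁ for all j. -/

import Mathlib

/-! If `d · y₁ ⊗ y₁ = Σ xⱼ ⊗ xⱼ`, evaluating on the diagonal at any `u` with `y₁ u = 0` gives a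
vanishing sum of squares, so every `xⱼ` vanishes on `ker y₁`. Since `y₁` is part of a basis of the
dual of a reflexive module, it takes the value `1` at some `u₀`, and a form vanishing on `ker y₁` is
then `xⱼ u₀ • y₁`. -/

namespace Module.Dual

variable {R M : Type*} [CommRing R] [AddCommGroup M] [Module R M]

theorem apply_eq_zero_of_sum_mul_self_eq [LinearOrder R] [IsStrictOrderedRing R]
    {ι : Type*} [Fintype ι] {d : R} {y : Dual R M} {x : ι → Dual R M}
    (h : ∀ u, d * (y u * y u) = ∑ j, x j u * x j u) {u : M} (hu : y u = 0) (j : ι) :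
    x j u = 0 := by
  have hsum : ∑ k, x k u * x k u = 0 := by rw [← h, hu, zero_mul, mul_zero]
  exact (Finset.sum_mul_self_eq_zero_iff _ _).mp hsum j (Finset.mem_univ j)

theorem eq_smul_of_apply_eq_one {f y : Dual R M} {u₀ : M} (hu₀ : y u₀ = 1)
    (hf : ∀ u, y u = 0 → f u = 0) : f = f u₀ • y := by
  ext u
  have hker : y (u - y u • u₀) = 0 := by simp [hu₀]
  have := hf _ hker
  rw [map_sub, map_smul, smul_eq_mul, sub_eq_zero] at this
  rw [this, LinearMap.smul_apply, smul_eq_mul, mul_comm]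

end Module.Dual

theorem Module.Basis.exists_apply_eq_one_of_dual {R M ι : Type*} [CommRing R] [AddCommGroup M]
    [Module R M] [Module.IsReflexive R M] (y : Module.Basis ι R (Module.Dual R M)) (i : ι) :
    ∃ u : M, y i u = 1 :=
  ⟨(Module.evalEquiv R M).symm (y.coord i), by
    rw [Module.apply_evalEquiv_symm_apply, Module.Basis.coord_apply, Module.Basis.repr_self,
      Finsupp.single_eq_same]⟩

/-- Over a subring `Λ ⊆ ℝ`, if `U` is a free `Λ`-module of finite rank `g`
with a basis `y₁,…,y_g` of the dual module, and linear forms `x₁,…,x_m` satisfy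
`d·y₁(u)·y₁(v) = Σ_j x_j(u)·x_j(v)` for all `u, v`, then each `x_j` is a scalar
multiple of `y₁`. -/
theorem stmt_3 (Λ : Subring ℝ) (U : Type*) [AddCommGroup U] [Module Λ U]
    [Module.Free Λ U] [Module.Finite Λ U]
    (g m : ℕ) (hg : 0 < g)
    (y : Module.Basis (Fin g) Λ (Module.Dual Λ U))
    (x : Fin m → Module.Dual Λ U) (d : Λ)
    (h : ∀ u v : U, d * (y ⟨0, hg⟩ u * y ⟨0, hg⟩ v) = ∑ j : Fin m, x j u * x j v) :
    ∀ j : Fin m, ∃ a : Λ, x j = a • y ⟨0, hg⟩ := by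
  intro j
  obtain ⟨u₀, hu₀⟩ := y.exists_apply_eq_one_of_dual ⟨0, hg⟩
  exact ⟨x j u₀, Module.Dual.eq_smul_of_apply_eq_one hu₀ fun u hu =>
    Module.Dual.apply_eq_zero_of_sum_mul_self_eq (fun u => h u u) hu j⟩
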